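/- arXiv:1506.08707 — 2 statements merged into one kernel-verified Lean document; each statement's English description precedes it below -/
import Mathlib

section
/- Let g = sl₂(ℂ) viewed as a real Lie algebra, let h₆ = span_ℝ{e₃} where e₃ = [[0,1],[-1,0]], and for b ∈ ℝ let m_b = span_ℝ{e₁, e₂, ie₁, ie₂, ie₃ + b·e₃}. Then g = h₆ ⊕ m_b as real vector spaces, [h₆, m_b] ⊆ m_b, and m_b generates g as a Lie algebra. -/
open Matrix

attribute [local instance 100] LieRing.ofAssociativeRing

/-!
Over ℝ, sl₂(ℂ) has basis e₁, e₂, e₃, ie₁, ie₂, ie₃, so h₆ + m_b is everything traceless, and the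
functional χ_b X = Re(X₀₁ - X₁₀) - b Im(X₀₁ - X₁₀) kills m_b but not e₃, which makes the sum
direct. The bracket with e₃ rotates the planes ⟨e₁, e₂⟩ and ⟨ie₁, ie₂⟩ and kills ie₃ + b e₃,
so m_b is ad e₃-stable. Finally ⁅e₁, e₂⁆ = 2 e₃, so the Lie algebra generated by m_b contains
e₃, hence ie₃, hence the whole basis.
-/

theorem lie_mem_span_of_forall_lie_mem {R L : Type*} [CommRing R] [LieRing L] [LieAlgebra R L]
    {A S : Set L} (h : ∀ a ∈ A, ∀ s ∈ S, ⁅a, s⁆ ∈ Submodule.span R S) {x y : L}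
    (hx : x ∈ Submodule.span R A) (hy : y ∈ Submodule.span R S) :
    ⁅x, y⁆ ∈ Submodule.span R S := by
  induction hx using Submodule.span_induction with
  | mem a ha =>
    induction hy using Submodule.span_induction with
    | mem s hs => exact h a ha s hs
    | zero => simp
    | add y z _ _ hy hz => rw [lie_add]; exact add_mem hy hz
    | smul r y _ hy => rw [lie_smul]; exact Submodule.smul_mem _ r hy
  | zero => simp
  | add x z _ _ hx hz => rw [add_lie]; exact add_mem hx hz
  | smul r x _ hx => rw [smul_lie]; exact Submodule.smul_mem _ r hx

namespace SlTwoComplex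

open Complex

noncomputable section

def e₁ : Matrix (Fin 2) (Fin 2) ℂ := !![1, 0; 0, -1]

def e₂ : Matrix (Fin 2) (Fin 2) ℂ := !![0, 1; 1, 0]

def e₃ : Matrix (Fin 2) (Fin 2) ℂ := !![0, 1; -1, 0]

def mGens (b : ℝ) : Set (Matrix (Fin 2) (Fin 2) ℂ) :=
  {e₁, e₂, I • e₁, I • e₂, I • e₃ + (b : ℂ) • e₃}

abbrev m (b : ℝ) : Submodule ℝ (Matrix (Fin 2) (Fin 2) ℂ) := Submodule.span ℝ (mGens b)

def chi (b : ℝ) : Matrix (Fin 2) (Fin 2) ℂ →ₗ[ℝ] ℝ :=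
  (reLm - b • imLm) ∘ₗ (entryLinearMap ℝ ℂ 0 1 - entryLinearMap ℝ ℂ 1 0)

end

theorem eq_basis_sum_of_trace_eq_zero {X : Matrix (Fin 2) (Fin 2) ℂ} (hX : X.trace = 0) :
    X = (X 0 0).re • e₁ + (X 0 0).im • (I • e₁)
      + ((X 0 1 + X 1 0) / 2).re • e₂ + ((X 0 1 + X 1 0) / 2).im • (I • e₂)
      + ((X 0 1 - X 1 0) / 2).re • e₃ + ((X 0 1 - X 1 0) / 2).im • (I • e₃) := by
  rw [trace_fin_two] at hX
  have h11 : X 1 1 = -X 0 0 := by linear_combination hX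
  ext i j
  fin_cases i <;> fin_cases j <;>
    simp [e₁, e₂, e₃, real_smul, h11] <;>
    · apply Complex.ext <;> simp <;> ring

theorem mem_of_trace_eq_zero (b : ℝ) {P : Submodule ℝ (Matrix (Fin 2) (Fin 2) ℂ)}
    (h₃ : e₃ ∈ P) (hS : mGens b ⊆ P) {X : Matrix (Fin 2) (Fin 2) ℂ} (hX : X.trace = 0) :
    X ∈ P := by
  have mem : ∀ {y}, y ∈ mGens b → y ∈ P := fun hy => hS hy
  have h₅ : I • e₃ + (b : ℂ) • e₃ ∈ P := mem (by simp [mGens])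
  have hi₃ : I • e₃ ∈ P := by simpa [coe_smul] using sub_mem h₅ (P.smul_mem b h₃)
  rw [eq_basis_sum_of_trace_eq_zero hX]
  exact add_mem (add_mem (add_mem (add_mem (add_mem
    (P.smul_mem _ (mem (by simp [mGens]))) (P.smul_mem _ (mem (by simp [mGens]))))
    (P.smul_mem _ (mem (by simp [mGens])))) (P.smul_mem _ (mem (by simp [mGens]))))
    (P.smul_mem _ h₃)) (P.smul_mem _ hi₃)

theorem m_le_ker_chi (b : ℝ) : m b ≤ LinearMap.ker (chi b) := by
  rw [Submodule.span_le]
  simp [mGens, Set.insert_subset_iff, chi, e₁, e₂, e₃]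
  ring

theorem chi_e₃ (b : ℝ) : chi b e₃ = 2 := by
  simp [chi, e₃]; norm_num

theorem e₃_notMem_m (b : ℝ) : e₃ ∉ m b := fun h => by
  simpa [chi_e₃] using m_le_ker_chi b h

theorem span_e₃_inf_m (b : ℝ) : Submodule.span ℝ {e₃} ⊓ m b = ⊥ := by
  have he₃ : e₃ ≠ 0 := fun h => by simpa [e₃] using congrFun (congrFun h 0) 1
  rw [← disjoint_iff, disjoint_comm, Submodule.disjoint_span_singleton' he₃]
  exact e₃_notMem_m b

theorem trace_eq_zero_of_mem_sup (b : ℝ) {X : Matrix (Fin 2) (Fin 2) ℂ}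
    (hX : X ∈ Submodule.span ℝ {e₃} ⊔ m b) : X.trace = 0 := by
  have : Submodule.span ℝ {e₃} ⊔ m b ≤ LinearMap.ker (traceLinearMap (Fin 2) ℝ ℂ) := by
    simp [Submodule.span_le, mGens, Set.insert_subset_iff, e₁, e₂, e₃, trace_fin_two]
  simpa using this hX

theorem lie_e₃_e₁ : ⁅e₃, e₁⁆ = (-2 : ℝ) • e₂ := by
  ext i j; fin_cases i <;> fin_cases j <;> simp [Ring.lie_def, e₁, e₂, e₃] <;> norm_num

theorem lie_e₃_e₂ : ⁅e₃, e₂⁆ = (2 : ℝ) • e₁ := by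
  ext i j; fin_cases i <;> fin_cases j <;> simp [Ring.lie_def, e₁, e₂, e₃] <;> norm_num

theorem lie_e₁_e₂ : ⁅e₁, e₂⁆ = (2 : ℝ) • e₃ := by
  ext i j; fin_cases i <;> fin_cases j <;> simp [Ring.lie_def, e₁, e₂, e₃] <;> norm_num

theorem lie_e₃_mGens_mem {b : ℝ} {s : Matrix (Fin 2) (Fin 2) ℂ} (hs : s ∈ mGens b) :
    ⁅e₃, s⁆ ∈ m b := by
  have mem : ∀ {y}, y ∈ mGens b → y ∈ m b := fun hy => Submodule.subset_span hy
  rcases hs with rfl | rfl | rfl | rfl | rfl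
  · rw [lie_e₃_e₁]; exact Submodule.smul_mem _ _ (mem (by simp [mGens]))
  · rw [lie_e₃_e₂]; exact Submodule.smul_mem _ _ (mem (by simp [mGens]))
  · rw [lie_smul, lie_e₃_e₁, smul_comm]; exact Submodule.smul_mem _ _ (mem (by simp [mGens]))
  · rw [lie_smul, lie_e₃_e₂, smul_comm]; exact Submodule.smul_mem _ _ (mem (by simp [mGens]))
  · simp [lie_add, lie_smul]

theorem mem_lieSpan_mGens_of_trace_eq_zero (b : ℝ) {X : Matrix (Fin 2) (Fin 2) ℂ}
    (hX : X.trace = 0) : X ∈ LieSubalgebra.lieSpan ℝ (Matrix (Fin 2) (Fin 2) ℂ) (mGens b) := by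
  set K := LieSubalgebra.lieSpan ℝ (Matrix (Fin 2) (Fin 2) ℂ) (mGens b)
  have mem : ∀ {y}, y ∈ mGens b → y ∈ K := fun hy => LieSubalgebra.subset_lieSpan hy
  have h₁ : e₁ ∈ K := mem (by simp [mGens])
  have h₂ : e₂ ∈ K := mem (by simp [mGens])
  have h₃ : e₃ ∈ K := by
    have : e₃ = (1 / 2 : ℝ) • ⁅e₁, e₂⁆ := by rw [lie_e₁_e₂, smul_smul]; norm_num
    rw [this]; exact K.smul_mem _ (K.lie_mem h₁ h₂)
  exact mem_of_trace_eq_zero b (P := K.toSubmodule) h₃ LieSubalgebra.subset_lieSpan hX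

end SlTwoComplex

/-- In g = sl₂(ℂ) as a real Lie algebra, with h₆ = span_ℝ{e₃} and
m_b = span_ℝ{e₁, e₂, ie₁, ie₂, ie₃ + b·e₃}, one has g = h₆ ⊕ m_b,
[h₆, m_b] ⊆ m_b, and m_b generates g as a Lie algebra. -/
theorem stmt_5 (b : ℝ) :
    let e₁ : Matrix (Fin 2) (Fin 2) ℂ := !![1, 0; 0, -1]
    let e₂ : Matrix (Fin 2) (Fin 2) ℂ := !![0, 1; 1, 0]
    let e₃ : Matrix (Fin 2) (Fin 2) ℂ := !![0, 1; -1, 0]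
    let h₆ : Submodule ℝ (Matrix (Fin 2) (Fin 2) ℂ) := Submodule.span ℝ {e₃}
    let S : Set (Matrix (Fin 2) (Fin 2) ℂ) :=
      {e₁, e₂, Complex.I • e₁, Complex.I • e₂, Complex.I • e₃ + (b : ℂ) • e₃}
    let m : Submodule ℝ (Matrix (Fin 2) (Fin 2) ℂ) := Submodule.span ℝ S
    -- g = h₆ ⊕ m_b as real vector spaces (g being the trace-zero matrices):
    (h₆ ⊓ m = ⊥) ∧
    (∀ X : Matrix (Fin 2) (Fin 2) ℂ, X.trace = 0 → X ∈ h₆ ⊔ m) ∧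
    (∀ X ∈ h₆ ⊔ m, Matrix.trace X = 0) ∧
    -- [h₆, m_b] ⊆ m_b:
    (∀ x ∈ h₆, ∀ y ∈ m, ⁅x, y⁆ ∈ m) ∧
    -- m_b generates g as a Lie algebra:
    (∀ X : Matrix (Fin 2) (Fin 2) ℂ, X.trace = 0 →
      X ∈ LieSubalgebra.lieSpan ℝ (Matrix (Fin 2) (Fin 2) ℂ) S) := by
  intro e₁ e₂ e₃ h₆ S m
  have h₃ : e₃ ∈ h₆ ⊔ m := Submodule.mem_sup_left (Submodule.mem_span_singleton_self _)
  have hS : SlTwoComplex.mGens b ⊆ (h₆ ⊔ m : Submodule ℝ _) :=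
    fun _ hy => Submodule.mem_sup_right (Submodule.subset_span hy)
  refine ⟨SlTwoComplex.span_e₃_inf_m b, fun X => SlTwoComplex.mem_of_trace_eq_zero b h₃ hS,
    fun X => SlTwoComplex.trace_eq_zero_of_mem_sup b,
    fun x hx y hy => lie_mem_span_of_forall_lie_mem ?_ hx hy,
    fun X => SlTwoComplex.mem_lieSpan_mGens_of_trace_eq_zero b⟩
  rintro a rfl s hs
  exact SlTwoComplex.lie_e₃_mGens_mem hs
end

section
/- Let g = sl₂(ℂ) viewed as a real Lie algebra and let h₅ = span_ℝ{e₂ + e₃} where e₂ = [[0,1],[1,0]], e₃ = [[0,1],[-1,0]]. Then there is no real vector subspace m complementary to h₅ in g with [h₅, m] ⊆ m. (In fact for any complement m containing an element of the form V₁ = e₁ + a(e₂+e₃), a ∈ ℝ, one has [e₂+e₃, V₁] = −2(e₂+e₃) ∈ h₅ \ {0}, contradicting invariance.) -/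
/-! The element `X = e₂ + e₃ = !![0, 2; 0, 0]` satisfies `⁅X, e₁⁆ = -2 X`. If `m` were an
`ad X`-invariant complement of `ℝ ∙ X`, then writing `e₁ = a X + y` with `y ∈ m` would give
`⁅X, e₁⁆ = ⁅X, y⁆ ∈ m`, so `-2 X ∈ (ℝ ∙ X) ⊓ m = ⊥`, which is absurd. -/

theorem Ring.lie_mem_of_mem_span_singleton_sup {R A : Type*} [CommRing R] [Ring A]
    [Algebra R A] {X Y : A} {m : Submodule R A} (hm : ∀ y ∈ m, ⁅X, y⁆ ∈ m)
    (hY : Y ∈ (R ∙ X) ⊔ m) : ⁅X, Y⁆ ∈ m := by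
  obtain ⟨x, hx, y, hy, rfl⟩ := Submodule.mem_sup.mp hY
  obtain ⟨a, rfl⟩ := Submodule.mem_span_singleton.mp hx
  convert hm y hy using 1
  simp only [Ring.lie_def, mul_add, add_mul, mul_smul_comm, smul_mul_assoc]
  abel

theorem lie_e₂_add_e₃_e₁ :
    ⁅(!![0, 1; 1, 0] + !![0, 1; -1, 0] : Matrix (Fin 2) (Fin 2) ℂ), !![1, 0; 0, -1]⁆ =
      (-2 : ℝ) • (!![0, 1; 1, 0] + !![0, 1; -1, 0] : Matrix (Fin 2) (Fin 2) ℂ) := by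
  ext i j
  fin_cases i <;> fin_cases j <;> norm_num [Ring.lie_def]

theorem e₂_add_e₃_ne_zero : (!![0, 1; 1, 0] + !![0, 1; -1, 0] : Matrix (Fin 2) (Fin 2) ℂ) ≠ 0 := by
  intro h
  have := congrFun (congrFun h 0) 1
  norm_num at this

/-- In g = sl₂(ℂ) as a real Lie algebra, the one-dimensional subalgebra
h₅ = span_ℝ{e₂ + e₃} admits no complementary subspace m in g with
[h₅, m] ⊆ m. -/
theorem stmt_6 :
    let e₂ : Matrix (Fin 2) (Fin 2) ℂ := !![0, 1; 1, 0]
    let e₃ : Matrix (Fin 2) (Fin 2) ℂ := !![0, 1; -1, 0]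
    let h₅ : Submodule ℝ (Matrix (Fin 2) (Fin 2) ℂ) := Submodule.span ℝ {e₂ + e₃}
    ¬ ∃ m : Submodule ℝ (Matrix (Fin 2) (Fin 2) ℂ),
        (∀ X ∈ m, Matrix.trace X = 0) ∧
        (h₅ ⊓ m = ⊥) ∧
        (∀ X : Matrix (Fin 2) (Fin 2) ℂ, X.trace = 0 → X ∈ h₅ ⊔ m) ∧
        (∀ x ∈ h₅, ∀ y ∈ m, ⁅x, y⁆ ∈ m) := by
  intro e₂ e₃ h₅
  rintro ⟨m, -, hinf, hsup, hinv⟩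
  have he₁ : (!![1, 0; 0, -1] : Matrix (Fin 2) (Fin 2) ℂ) ∈ h₅ ⊔ m :=
    hsup _ (by simp [Matrix.trace_fin_two])
  have hm : ⁅e₂ + e₃, !![1, 0; 0, -1]⁆ ∈ m :=
    Ring.lie_mem_of_mem_span_singleton_sup (hinv _ (Submodule.mem_span_singleton_self _)) he₁
  have hh : ⁅e₂ + e₃, !![1, 0; 0, -1]⁆ ∈ h₅ := by
    rw [lie_e₂_add_e₃_e₁]
    exact Submodule.smul_mem _ _ (Submodule.mem_span_singleton_self _)
  have hzero : (-2 : ℝ) • (e₂ + e₃) = 0 := by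
    rw [← lie_e₂_add_e₃_e₁, ← Submodule.mem_bot ℝ, ← hinf]
    exact ⟨hh, hm⟩
  exact e₂_add_e₃_ne_zero ((smul_eq_zero.mp hzero).resolve_left (by norm_num))
end
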